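/- For every integer l, the function ψ_l : (ℝ²)³ → ℂ defined by ψ_l((a₁,a₂),(b₁,b₂),(c₁,c₂)) = exp(2πi·l·{a₁}·({b₂} + {c₂} − {b₂+c₂})), where {x} denotes the fractional part of x, satisfies the group 3-cocycle identity: for all u, v, w, z ∈ ℝ², ψ_l(v,w,z) · ψ_l(u+v,w,z)⁻¹ · ψ_l(u,v+w,z) · ψ_l(u,v,w+z)⁻¹ · ψ_l(u,v,w) = 1. (Since ψ_l depends only on the arguments modulo ℤ², this says that ψ_l defines a U(1)-valued group 3-cocycle on the group U(1)×U(1) = ℝ²/ℤ².) -/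
import Mathlib


open Complex

/-- The level-`l` group 3-cochain
`ψ_l((a₁,a₂),(b₁,b₂),(c₁,c₂)) = exp(2πil·{a₁}·({b₂}+{c₂}-{b₂+c₂}))` on `ℝ²`
(descending to `U(1) × U(1) = ℝ²/ℤ²`). -/
noncomputable def psiCocycle (l : ℤ) (u v w : ℝ × ℝ) : ℂ :=
  Complex.exp (2 * Real.pi * Complex.I * (l : ℂ) * ((Int.fract u.1 : ℝ) : ℂ) *
    (((Int.fract v.2 : ℝ) : ℂ) + ((Int.fract w.2 : ℝ) : ℂ) - ((Int.fract (v.2 + w.2) : ℝ) : ℂ)))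

theorem psiCocycle_is_cocycle (l : ℤ) (u v w z : ℝ × ℝ) :
    psiCocycle l v w z * (psiCocycle l (u + v) w z)⁻¹ * psiCocycle l u (v + w) z *
        (psiCocycle l u v (w + z))⁻¹ * psiCocycle l u v w = 1 := by
  unfold psiCocycle
  rw [← Complex.exp_neg, ← Complex.exp_neg, ← Complex.exp_add, ← Complex.exp_add,
    ← Complex.exp_add, ← Complex.exp_add]
  have key : (2 * Real.pi * Complex.I * (l : ℂ) * ((Int.fract v.1 : ℝ) : ℂ) *
      (((Int.fract w.2 : ℝ) : ℂ) + ((Int.fract z.2 : ℝ) : ℂ) - ((Int.fract (w.2 + z.2) : ℝ) : ℂ)) +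
      -(2 * Real.pi * Complex.I * (l : ℂ) * ((Int.fract (u + v).1 : ℝ) : ℂ) *
      (((Int.fract w.2 : ℝ) : ℂ) + ((Int.fract z.2 : ℝ) : ℂ) - ((Int.fract (w.2 + z.2) : ℝ) : ℂ))) +
      2 * Real.pi * Complex.I * (l : ℂ) * ((Int.fract u.1 : ℝ) : ℂ) *
      (((Int.fract (v + w).2 : ℝ) : ℂ) + ((Int.fract z.2 : ℝ) : ℂ) - ((Int.fract ((v + w).2 + z.2) : ℝ) : ℂ)) +
      -(2 * Real.pi * Complex.I * (l : ℂ) * ((Int.fract u.1 : ℝ) : ℂ) *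
      (((Int.fract v.2 : ℝ) : ℂ) + ((Int.fract (w + z).2 : ℝ) : ℂ) - ((Int.fract (v.2 + (w + z).2) : ℝ) : ℂ))) +
      2 * Real.pi * Complex.I * (l : ℂ) * ((Int.fract u.1 : ℝ) : ℂ) *
      (((Int.fract v.2 : ℝ) : ℂ) + ((Int.fract w.2 : ℝ) : ℂ) - ((Int.fract (v.2 + w.2) : ℝ) : ℂ)))
      = ((l * (⌊u.1 + v.1⌋ - ⌊u.1⌋ - ⌊v.1⌋) * (⌊w.2 + z.2⌋ - ⌊w.2⌋ - ⌊z.2⌋) : ℤ) : ℂ)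
        * (2 * Real.pi * Complex.I) := by
    simp only [Prod.fst_add, Prod.snd_add, Int.fract]
    rw [show v.2 + w.2 + z.2 = v.2 + (w.2 + z.2) by ring]
    push_cast
    ring
  rw [key, Complex.exp_int_mul_two_pi_mul_I]
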